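/- arXiv:2002.05802 — 6 statements merged into one kernel-verified Lean document; each statement's English description precedes it below -/
import Mathlib

section
/- Let n ≥ 1, α ∈ (0,2), and let ρ : ℝⁿ → ℝ be a nonnegative, bounded, integrable function with total mass M = ∫_{ℝⁿ} ρ(y) dy. Suppose ρ attains its global maximum at a point x⁺ (i.e. ρ(y) ≤ ρ(x⁺) for all y ∈ ℝⁿ). Then for every r > 0 one has ∫_{ℝⁿ} (ρ(x⁺) − ρ(x⁺ + z)) |z|^{−(n+α)} dz ≥ r^{−(n+α)} ( V_n r^n ρ(x⁺) − M ), where V_n denotes the Lebesgue volume of the unit ball in ℝⁿ and the integral on the left, having a nonnegative integrand, is interpreted as a value in [0, ∞]. -/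
/-!
On the ball `B_r` the kernel `|z|^{-(n+α)}` is at least `r^{-(n+α)}`, and the integrand is
nonnegative because `x⁺` is a maximum point; so the dissipation is at least `r^{-(n+α)}` times
`∫_{B_r} (ρ(x⁺) − ρ(x⁺ + z)) dz = |B_r| ρ(x⁺) − ∫_{B_r} ρ(x⁺ + z) dz ≥ V_n r^n ρ(x⁺) − M`,
the last step by translation invariance and `ρ ≥ 0`.
-/

open MeasureTheory Metric

theorem measureReal_mul_sub_integral_le_setIntegral_sub {G : Type*} [AddGroup G]
    [MeasurableSpace G] [MeasurableAdd G] {μ : Measure G} [μ.IsAddLeftInvariant]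
    {ρ : G → ℝ} (hρ_nonneg : ∀ y, 0 ≤ ρ y) (hρ_int : Integrable ρ μ) (x : G) {S : Set G}
    (hS : μ S ≠ ⊤) :
    μ.real S * ρ x - ∫ y, ρ y ∂μ ≤ ∫ z in S, (ρ x - ρ (x + z)) ∂μ := by
  have hρ_shift : Integrable (fun z => ρ (x + z)) μ := hρ_int.comp_add_left x
  have h_shift_le : ∫ z in S, ρ (x + z) ∂μ ≤ ∫ y, ρ y ∂μ :=
    calc ∫ z in S, ρ (x + z) ∂μ ≤ ∫ z, ρ (x + z) ∂μ :=
          setIntegral_le_integral hρ_shift (.of_forall fun z => hρ_nonneg _)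
      _ = ∫ y, ρ y ∂μ := integral_add_left_eq_self ρ x
  rw [integral_sub (integrableOn_const hS : IntegrableOn (fun _ => ρ x) S μ)
    hρ_shift.integrableOn, setIntegral_const,
    smul_eq_mul]
  linarith

theorem ofReal_mul_setIntegral_le_lintegral {α : Type*} [MeasurableSpace α] {μ : Measure α}
    {S : Set α} (hS : MeasurableSet S) {g h : α → ℝ} (hg_int : IntegrableOn g S μ)
    (hg_nonneg : 0 ≤ᵐ[μ.restrict S] g) {c : ℝ} (hc : 0 ≤ c) (hgh : ∀ z ∈ S, c * g z ≤ h z) :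
    ENNReal.ofReal (c * ∫ z in S, g z ∂μ) ≤ ∫⁻ z, ENNReal.ofReal (h z) ∂μ :=
  calc ENNReal.ofReal (c * ∫ z in S, g z ∂μ)
      = ENNReal.ofReal c * ∫⁻ z in S, ENNReal.ofReal (g z) ∂μ := by
        rw [ENNReal.ofReal_mul hc, ofReal_integral_eq_lintegral_ofReal hg_int hg_nonneg]
    _ = ∫⁻ z in S, ENNReal.ofReal (c * g z) ∂μ := by
        rw [← lintegral_const_mul' _ _ ENNReal.ofReal_ne_top]
        simp_rw [ENNReal.ofReal_mul hc]
    _ ≤ ∫⁻ z in S, ENNReal.ofReal (h z) ∂μ :=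
        setLIntegral_mono' hS fun z hz => ENNReal.ofReal_le_ofReal (hgh z hz)
    _ ≤ ∫⁻ z, ENNReal.ofReal (h z) ∂μ := setLIntegral_le_lintegral _ _

theorem rpow_mul_le_mul_norm_rpow_of_mem_ball {E : Type*} [SeminormedAddGroup E] {ν r a : ℝ}
    (hν : 0 ≤ ν) {z : E} (hz : z ∈ ball (0 : E) r) (ha : 0 ≤ a) (ha0 : ‖z‖ = 0 → a = 0) :
    r ^ (-ν) * a ≤ a * ‖z‖ ^ (-ν) := by
  rcases (norm_nonneg z).eq_or_lt with hz0 | hz0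
  · simp [ha0 hz0.symm]
  · rw [mul_comm]
    refine mul_le_mul_of_nonneg_left ?_ ha
    exact Real.rpow_le_rpow_of_nonpos hz0 (mem_ball_zero_iff.1 hz).le (neg_nonpos.2 hν)

theorem stmt0_general (n : ℕ) (α : ℝ) (hα0 : 0 < α)
    (ρ : EuclideanSpace ℝ (Fin n) → ℝ)
    (hρ_nonneg : ∀ y, 0 ≤ ρ y)
    (hρ_int : Integrable ρ)
    (xplus : EuclideanSpace ℝ (Fin n))
    (hmax : ∀ y, ρ y ≤ ρ xplus)
    (r : ℝ) (hr : 0 < r) :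
    ENNReal.ofReal (r ^ (-((n : ℝ) + α)) *
        ((volume (Metric.ball (0 : EuclideanSpace ℝ (Fin n)) 1)).toReal * r ^ (n : ℝ) * ρ xplus
          - ∫ y, ρ y)) ≤
      ∫⁻ z, ENNReal.ofReal ((ρ xplus - ρ (xplus + z)) * ‖z‖ ^ (-((n : ℝ) + α))) := by
  set B := ball (0 : EuclideanSpace ℝ (Fin n)) r
  have hgap : ∀ z, 0 ≤ ρ xplus - ρ (xplus + z) := fun z => sub_nonneg.2 (hmax _)
  have hvol : volume.real B = (volume (ball (0 : EuclideanSpace ℝ (Fin n)) 1)).toReal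
      * r ^ (n : ℝ) := by
    rw [measureReal_def, Measure.addHaar_ball_of_pos _ _ hr, ENNReal.toReal_mul,
      ENNReal.toReal_ofReal (by positivity), finrank_euclideanSpace, Fintype.card_fin,
      Real.rpow_natCast, mul_comm]
  have hbound : volume.real B * ρ xplus - ∫ y, ρ y ≤ ∫ z in B, (ρ xplus - ρ (xplus + z)) :=
    measureReal_mul_sub_integral_le_setIntegral_sub hρ_nonneg hρ_int xplus measure_ball_lt_top.ne
  rw [hvol] at hbound
  calc _ ≤ ENNReal.ofReal (r ^ (-((n : ℝ) + α)) * ∫ z in B, (ρ xplus - ρ (xplus + z))) :=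
          ENNReal.ofReal_le_ofReal (mul_le_mul_of_nonneg_left hbound (by positivity))
    _ ≤ _ := ofReal_mul_setIntegral_le_lintegral measurableSet_ball
        ((integrableOn_const measure_ball_lt_top.ne).sub
          (hρ_int.comp_add_left xplus).integrableOn)
        (.of_forall hgap) (by positivity) fun z hz =>
          rpow_mul_le_mul_norm_rpow_of_mem_ball (by positivity) hz (hgap z) fun hz0 => by
            simp [norm_eq_zero.1 hz0]

/-- At a global maximum point of a nonnegative, bounded, integrable density,
the fractional dissipation integral is bounded below by
`r^{-(n+α)} (V_n r^n ρ(x⁺) − M)` for every `r > 0`. -/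
theorem stmt0 (n : ℕ) (hn : 1 ≤ n) (α : ℝ) (hα0 : 0 < α) (hα2 : α < 2)
    (ρ : EuclideanSpace ℝ (Fin n) → ℝ)
    (hρ_nonneg : ∀ y, 0 ≤ ρ y)
    (hρ_bdd : ∃ B, ∀ y, ρ y ≤ B)
    (hρ_int : Integrable ρ)
    (xplus : EuclideanSpace ℝ (Fin n))
    (hmax : ∀ y, ρ y ≤ ρ xplus)
    (r : ℝ) (hr : 0 < r) :
    ENNReal.ofReal (r ^ (-((n : ℝ) + α)) *
        ((volume (Metric.ball (0 : EuclideanSpace ℝ (Fin n)) 1)).toReal * r ^ (n : ℝ) * ρ xplus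
          - ∫ y, ρ y)) ≤
      ∫⁻ z, ENNReal.ofReal ((ρ xplus - ρ (xplus + z)) * ‖z‖ ^ (-((n : ℝ) + α))) :=
  stmt0_general n α hα0 ρ hρ_nonneg hρ_int xplus hmax r hr
end

section
/- Let I ⊆ ℝ be an open interval and let ρ, u : ℝⁿ × I → ℝ be C¹ functions and q : ℝⁿ × I → ℝ a C² function, with ρ(x, t) > 0 everywhere, satisfying the continuity equation ∂_t ρ + ∂_{x₁}(ρ u) = 0 and the transport equation ∂_t q + u ∂_{x₁} q = 0 on ℝⁿ × I. Then the function w := (∂_{x₁} q)/ρ satisfies the same transport equation: ∂_t w + u ∂_{x₁} w = 0 on ℝⁿ × I. -/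
/-!
Along the flow, `D = ∂_a + u ∂_b` fails to commute with `∂_b` only by the stretching term:
`D (∂_b q) = ∂_b (D q) - (∂_b u) ∂_b q`, and the continuity equation says `D ρ = -ρ ∂_b u`.
So if `D q = 0`, then `∂_b q` and `ρ` obey the same linear equation `D g = -(∂_b u) g`,
and their quotient is transported.
-/

open Set Filter Topology

variable {E : Type*} [NormedAddCommGroup E] [NormedSpace ℝ E]

theorem fderiv_div_apply {f g : E → ℝ} {x : E} (hf : DifferentiableAt ℝ f x)
    (hg : DifferentiableAt ℝ g x) (hx : g x ≠ 0) (d : E) :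
    fderiv ℝ (fun y => f y / g y) x d =
      (fderiv ℝ f x d * g x - f x * fderiv ℝ g x d) / g x ^ 2 := by
  have hinv : HasFDerivAt (fun y => (g y)⁻¹) ((-(g x ^ 2)⁻¹) • fderiv ℝ g x) x :=
    (hasDerivAt_inv hx).comp_hasFDerivAt x hg.hasFDerivAt
  have hdiv : fderiv ℝ (fun y => f y / g y) x =
      f x • ((-(g x ^ 2)⁻¹) • fderiv ℝ g x) + (g x)⁻¹ • fderiv ℝ f x := by
    simpa only [div_eq_mul_inv, Pi.mul_def] using (hf.hasFDerivAt.mul hinv).fderiv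
  rw [hdiv]
  simp only [add_apply, smul_apply, smul_eq_mul]
  field_simp
  ring

theorem ContDiffAt.differentiableAt_fderiv {q : E → ℝ} {x : E} (hq : ContDiffAt ℝ 2 q x) :
    DifferentiableAt ℝ (fderiv ℝ q) x :=
  (hq.fderiv_right (by norm_num)).differentiableAt one_ne_zero

theorem fderiv_fderiv_apply_comm {q : E → ℝ} {x : E} (hq : ContDiffAt ℝ 2 q x) (a b : E) :
    fderiv ℝ (fun y => fderiv ℝ q y a) x b = fderiv ℝ (fun y => fderiv ℝ q y b) x a := by
  rw [fderiv_clm_apply hq.differentiableAt_fderiv (differentiableAt_const a),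
    fderiv_clm_apply hq.differentiableAt_fderiv (differentiableAt_const b)]
  simpa using hq.isSymmSndFDerivAt (by simp) b a

/-- The paper's `D_t = ∂_t + u ∂_{x₁}` is the case `a = e_t`, `b = e_{x₁}`. -/
noncomputable def materialDeriv (u : E → ℝ) (a b : E) (f : E → ℝ) (p : E) : ℝ :=
  fderiv ℝ f p a + u p * fderiv ℝ f p b

namespace materialDeriv

variable {u ρ f q : E → ℝ} {a b p : E}

theorem div (hf : DifferentiableAt ℝ f p) (hρ : DifferentiableAt ℝ ρ p) (hp : ρ p ≠ 0) :
    materialDeriv u a b (fun w => f w / ρ w) p =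
      (materialDeriv u a b f p * ρ p - f p * materialDeriv u a b ρ p) / ρ p ^ 2 := by
  simp only [materialDeriv, fderiv_div_apply hf hρ hp]
  field_simp
  ring

theorem eq_neg_mul_of_continuity (hρ : DifferentiableAt ℝ ρ p) (hu : DifferentiableAt ℝ u p)
    (hcont : fderiv ℝ ρ p a + fderiv ℝ (fun w => ρ w * u w) p b = 0) :
    materialDeriv u a b ρ p = -(ρ p * fderiv ℝ u p b) := by
  rw [fderiv_fun_mul hρ hu] at hcont
  simp only [add_apply, smul_apply, smul_eq_mul] at hcont
  unfold materialDeriv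
  linarith

theorem fderiv_apply (hq : ContDiffAt ℝ 2 q p) (hu : DifferentiableAt ℝ u p) :
    materialDeriv u a b (fun w => fderiv ℝ q w b) p =
      fderiv ℝ (materialDeriv u a b q) p b - fderiv ℝ u p b * fderiv ℝ q p b := by
  have hdir (d : E) : DifferentiableAt ℝ (fun w => fderiv ℝ q w d) p :=
    hq.differentiableAt_fderiv.clm_apply (differentiableAt_const d)
  unfold materialDeriv
  rw [fderiv_fun_add (hdir a) (hu.fun_mul (hdir b)), fderiv_fun_mul hu (hdir b)]
  simp only [add_apply, smul_apply, smul_eq_mul]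
  rw [fderiv_fderiv_apply_comm hq a b]
  ring

theorem fderiv_div_eq_zero (hρ : DifferentiableAt ℝ ρ p) (hu : DifferentiableAt ℝ u p)
    (hq : ContDiffAt ℝ 2 q p) (hp : ρ p ≠ 0)
    (hcont : fderiv ℝ ρ p a + fderiv ℝ (fun w => ρ w * u w) p b = 0)
    (htrans : materialDeriv u a b q =ᶠ[𝓝 p] 0) :
    materialDeriv u a b (fun w => fderiv ℝ q w b / ρ w) p = 0 := by
  have hqb : DifferentiableAt ℝ (fun w => fderiv ℝ q w b) p :=
    hq.differentiableAt_fderiv.clm_apply (differentiableAt_const b)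
  have hDq : fderiv ℝ (materialDeriv u a b q) p = 0 := by
    rw [htrans.fderiv_eq]
    exact fderiv_const_apply 0
  rw [div hqb hρ hp, fderiv_apply hq hu, eq_neg_mul_of_continuity hρ hu hcont, hDq]
  simp only [zero_apply]
  ring

end materialDeriv

theorem stmt6_general (n : ℕ) (hn : 0 < n) (I : Set ℝ) (hI_open : IsOpen I)
    (ρ u : ((Fin n → ℝ) × ℝ) → ℝ) (q : ((Fin n → ℝ) × ℝ) → ℝ)
    (hρ : ContDiffOn ℝ 1 ρ (Set.univ ×ˢ I))
    (hu : ContDiffOn ℝ 1 u (Set.univ ×ˢ I))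
    (hq : ContDiffOn ℝ 2 q (Set.univ ×ˢ I))
    (hpos : ∀ p ∈ Set.univ ×ˢ I, 0 < ρ p)
    (hcont : ∀ p ∈ Set.univ ×ˢ I,
      fderiv ℝ ρ p ((0 : Fin n → ℝ), (1 : ℝ)) +
        fderiv ℝ (fun w => ρ w * u w) p
          ((Pi.single (⟨0, hn⟩ : Fin n) (1 : ℝ) : Fin n → ℝ), (0 : ℝ)) = 0)
    (htrans : ∀ p ∈ Set.univ ×ˢ I,
      fderiv ℝ q p ((0 : Fin n → ℝ), (1 : ℝ)) +
        u p * fderiv ℝ q p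
          ((Pi.single (⟨0, hn⟩ : Fin n) (1 : ℝ) : Fin n → ℝ), (0 : ℝ)) = 0) :
    ∀ p ∈ Set.univ ×ˢ I,
      fderiv ℝ (fun w =>
          fderiv ℝ q w ((Pi.single (⟨0, hn⟩ : Fin n) (1 : ℝ) : Fin n → ℝ), (0 : ℝ)) / ρ w)
          p ((0 : Fin n → ℝ), (1 : ℝ)) +
        u p * fderiv ℝ (fun w =>
          fderiv ℝ q w ((Pi.single (⟨0, hn⟩ : Fin n) (1 : ℝ) : Fin n → ℝ), (0 : ℝ)) / ρ w)
          p ((Pi.single (⟨0, hn⟩ : Fin n) (1 : ℝ) : Fin n → ℝ), (0 : ℝ)) = 0 := by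
  intro p hp
  have hΩ : Set.univ ×ˢ I ∈ 𝓝 p := (isOpen_univ.prod hI_open).mem_nhds hp
  exact materialDeriv.fderiv_div_eq_zero
    ((hρ.contDiffAt hΩ).differentiableAt one_ne_zero)
    ((hu.contDiffAt hΩ).differentiableAt one_ne_zero)
    (hq.contDiffAt hΩ) (hpos p hp).ne' (hcont p hp) (eventually_of_mem hΩ htrans)

/-- If `ρ, u` are `C¹`, `q` is `C²`, `ρ > 0`, the continuity equation
`∂_t ρ + ∂_{x₁}(ρu) = 0` holds and `q` is transported (`∂_t q + u ∂_{x₁} q = 0`),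
then `w = (∂_{x₁} q)/ρ` satisfies the same transport equation. -/
theorem stmt6 (n : ℕ) (hn : 0 < n) (I : Set ℝ) (hI_open : IsOpen I) (hI_conn : I.OrdConnected)
    (ρ u : ((Fin n → ℝ) × ℝ) → ℝ) (q : ((Fin n → ℝ) × ℝ) → ℝ)
    (hρ : ContDiffOn ℝ 1 ρ (Set.univ ×ˢ I))
    (hu : ContDiffOn ℝ 1 u (Set.univ ×ˢ I))
    (hq : ContDiffOn ℝ 2 q (Set.univ ×ˢ I))
    (hpos : ∀ p ∈ Set.univ ×ˢ I, 0 < ρ p)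
    (hcont : ∀ p ∈ Set.univ ×ˢ I,
      fderiv ℝ ρ p ((0 : Fin n → ℝ), (1 : ℝ)) +
        fderiv ℝ (fun w => ρ w * u w) p
          ((Pi.single (⟨0, hn⟩ : Fin n) (1 : ℝ) : Fin n → ℝ), (0 : ℝ)) = 0)
    (htrans : ∀ p ∈ Set.univ ×ˢ I,
      fderiv ℝ q p ((0 : Fin n → ℝ), (1 : ℝ)) +
        u p * fderiv ℝ q p
          ((Pi.single (⟨0, hn⟩ : Fin n) (1 : ℝ) : Fin n → ℝ), (0 : ℝ)) = 0) :
    ∀ p ∈ Set.univ ×ˢ I,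
      fderiv ℝ (fun w =>
          fderiv ℝ q w ((Pi.single (⟨0, hn⟩ : Fin n) (1 : ℝ) : Fin n → ℝ), (0 : ℝ)) / ρ w)
          p ((0 : Fin n → ℝ), (1 : ℝ)) +
        u p * fderiv ℝ (fun w =>
          fderiv ℝ q w ((Pi.single (⟨0, hn⟩ : Fin n) (1 : ℝ) : Fin n → ℝ), (0 : ℝ)) / ρ w)
          p ((Pi.single (⟨0, hn⟩ : Fin n) (1 : ℝ) : Fin n → ℝ), (0 : ℝ)) = 0 :=
  stmt6_general n hn I hI_open ρ u q hρ hu hq hpos hcont htrans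
end

section
/- Let n ≥ 1 and α ∈ (0, 2). There exists a constant c = c(n, α) > 0 such that for every bounded C¹ function f : ℝⁿ → ℝ with ‖f‖_∞ > 0, and every x ∈ ℝⁿ, one has (interpreting the left side as a value in [0, ∞]): ∫_{ℝⁿ} |∇f(x+z) − ∇f(x)|² |z|^{−(n+α)} dz ≥ c |∇f(x)|^{2+α} / ‖f‖_∞^α. -/
/-!
Let `a = ∇f(x) ≠ 0`, `G = ‖a‖`, `B = ‖f‖_∞`, and let `Q` be the cube of side `2R`, `R = 2B/G`,
centred at `0` with one axis along `a`. Integrating `∂_a f` over `x + Q` only sees the values of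
`f` on two opposite faces, so `∫_Q ⟪∇f(x+z), a⟫ ≤ G · 2B (2R)^{n-1}`. Together with the pointwise
bound `‖∇f(x+z) - a‖² ≥ ¾ G² - ⟪∇f(x+z), a⟫` this gives `∫_Q ‖∇f(x+z) - a‖² ≥ B G (2R)^{n-1}`,
and on `Q` the kernel `‖z‖^{-(n+α)}` is at least `(√n R)^{-(n+α)}`.
-/

open MeasureTheory Set
open scoped RealInnerProductSpace

def cube (n : ℕ) (R : ℝ) : Set (Fin n → ℝ) := Icc (fun _ => -R) (fun _ => R)

lemma volume_real_cube (n : ℕ) {R : ℝ} (hR : 0 ≤ R) : volume.real (cube n R) = (2 * R) ^ n := by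
  rw [measureReal_def, cube, Real.volume_Icc_pi_toReal fun _ => by linarith]
  simp [two_mul]

lemma volume_cube_lt_top (n : ℕ) (R : ℝ) : volume (cube n R) < ⊤ :=
  isCompact_Icc.measure_lt_top

lemma norm_toLp_le_of_mem_cube {n : ℕ} {R : ℝ} (hR : 0 ≤ R) {v : Fin n → ℝ}
    (hv : v ∈ cube n R) :
    ‖WithLp.toLp 2 v‖ ≤ √n * R := by
  rw [EuclideanSpace.norm_eq, ← Real.sqrt_sq hR, ← Real.sqrt_mul (Nat.cast_nonneg n)]
  refine Real.sqrt_le_sqrt ?_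
  calc ∑ i, ‖v i‖ ^ 2 ≤ ∑ _i : Fin n, R ^ 2 := by
        refine Finset.sum_le_sum fun i _ => ?_
        rw [Real.norm_eq_abs, sq_abs]
        exact sq_le_sq' (hv.1 i) (hv.2 i)
    _ = n * R ^ 2 := by simp

lemma abs_setIntegral_cube_le {n : ℕ} {R B : ℝ} (hR : 0 ≤ R) {h : (Fin n → ℝ) → ℝ}
    (hB : ∀ v, |h v| ≤ B) : |∫ v in cube n R, h v| ≤ B * (2 * R) ^ n := by
  rw [← volume_real_cube n hR, ← Real.norm_eq_abs]
  exact norm_setIntegral_le_of_norm_le_const (volume_cube_lt_top n R) fun v _ => hB v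

lemma integral_cube_fderiv_le {m : ℕ} {g : (Fin (m + 1) → ℝ) → ℝ} (hg : ContDiff ℝ 1 g)
    {B R : ℝ} (hgB : ∀ v, |g v| ≤ B) (hR : 0 ≤ R) (i : Fin (m + 1)) :
    ∫ v in cube (m + 1) R, fderiv ℝ g v (Pi.single i 1) ≤ 2 * B * (2 * R) ^ m := by
  have hle : (fun _ : Fin (m + 1) => -R) ≤ fun _ => R := fun _ => by linarith
  let F : Fin (m + 1) → (Fin (m + 1) → ℝ) → ℝ := Pi.single i g
  let F' : Fin (m + 1) → (Fin (m + 1) → ℝ) → (Fin (m + 1) → ℝ) →L[ℝ] ℝ :=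
    Pi.single i (fderiv ℝ g)
  have hsum : (fun v => ∑ j, F' j v (Pi.single j 1)) = fun v => fderiv ℝ g v (Pi.single i 1) := by
    funext v
    rw [Fintype.sum_eq_single i fun j hj => by simp [F', Pi.single_eq_of_ne hj]]
    simp [F']
  have hdiv := integral_divergence_of_hasFDerivAt_off_countable' _ _ hle F F' ∅ countable_empty
    (fun j => by
      rcases eq_or_ne j i with rfl | hj
      · simpa [F] using hg.continuous.continuousOn
      · simp only [F, Pi.single_eq_of_ne hj]
        exact continuousOn_const)
    (fun v _ j => by
      rcases eq_or_ne j i with rfl | hj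
      · simpa [F, F'] using (hg.differentiable one_ne_zero v).hasFDerivAt
      · simp only [F, F', Pi.single_eq_of_ne hj]
        exact hasFDerivAt_const 0 v)
    (by
      rw [hsum]
      exact ((hg.continuous_fderiv one_ne_zero).clm_apply continuous_const).continuousOn
        |>.integrableOn_compact isCompact_Icc)
  rw [hsum, Fintype.sum_eq_single i fun j hj => by simp [F, Pi.single_eq_of_ne hj]] at hdiv
  simp only [F, Pi.single_eq_same] at hdiv
  change _ = (∫ y in cube m R, g (i.insertNth R y)) - ∫ y in cube m R, g (i.insertNth (-R) y)
    at hdiv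
  rw [cube, hdiv]
  have front := abs_le.mp (abs_setIntegral_cube_le (n := m) hR fun y => hgB (i.insertNth R y))
  have back := abs_le.mp (abs_setIntegral_cube_le (n := m) hR fun y => hgB (i.insertNth (-R) y))
  linarith [front.2, back.1]

lemma three_quarters_sq_sub_inner_le_norm_sub_sq {E : Type*} [NormedAddCommGroup E]
    [InnerProductSpace ℝ E] (a b : E) : 3 / 4 * ‖a‖ ^ 2 - ⟪b, a⟫ ≤ ‖b - a‖ ^ 2 := by
  have h := norm_sub_sq_real b ((2 : ℝ)⁻¹ • a)
  rw [norm_smul, inner_smul_right, Real.norm_of_nonneg (by norm_num)] at h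
  rw [norm_sub_sq_real]
  nlinarith [sq_nonneg ‖b - (2 : ℝ)⁻¹ • a‖]

lemma exists_measurePreserving_toLp_map_single (n : ℕ) (w : EuclideanSpace ℝ (Fin n))
    (i : Fin n) :
    ∃ A : (Fin n → ℝ) →L[ℝ] EuclideanSpace ℝ (Fin n), MeasurePreserving A ∧
      (∀ v, ‖A v‖ = ‖WithLp.toLp 2 v‖) ∧ ‖w‖ • A (Pi.single i 1) = w := by
  let L := Submodule.reflection (ℝ ∙ (‖w‖ • EuclideanSpace.single i (1 : ℝ) - w))ᗮ
  refine ⟨L.toContinuousLinearEquiv.toContinuousLinearMap.comp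
      (EuclideanSpace.equiv (Fin n) ℝ).symm.toContinuousLinearMap,
    L.measurePreserving.comp (EuclideanSpace.volume_preserving_symm_measurableEquiv_toLp _).symm,
    fun v => L.norm_map _, ?_⟩
  have hL : L (‖w‖ • EuclideanSpace.single i (1 : ℝ)) = w :=
    Submodule.reflection_sub (by simp [norm_smul])
  simpa using hL

-- `hq_zero` is needed because `‖0‖ ^ (-s) = 0` in Lean, not `∞`.
lemma ofReal_rpow_neg_mul_setIntegral_le_lintegral {X E : Type*} [MeasurableSpace X]
    [NormedAddCommGroup E] [MeasurableSpace E] [BorelSpace E] {ν : Measure X} {μ : Measure E}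
    {A : X → E} (hA : MeasurePreserving A ν μ) {S : Set X} {ρ s : ℝ} (hρ : 0 ≤ ρ) (hs : 0 ≤ s)
    (hAS : ∀ v ∈ S, ‖A v‖ ≤ ρ) {q : E → ℝ} (hq : Measurable q) (hq_nonneg : ∀ z, 0 ≤ q z)
    (hq_zero : q 0 = 0) (hqS : IntegrableOn (fun v => q (A v)) S ν) :
    ENNReal.ofReal (ρ ^ (-s) * ∫ v in S, q (A v) ∂ν) ≤
      ∫⁻ z, ENNReal.ofReal (q z * ‖z‖ ^ (-s)) ∂μ := by
  have hmeas : Measurable fun z => ENNReal.ofReal (q z * ‖z‖ ^ (-s)) :=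
    (hq.mul (measurable_norm.pow_const _)).ennreal_ofReal
  calc ENNReal.ofReal (ρ ^ (-s) * ∫ v in S, q (A v) ∂ν)
      = ∫⁻ v in S, ENNReal.ofReal (ρ ^ (-s) * q (A v)) ∂ν := by
        rw [← integral_const_mul]
        exact ofReal_integral_eq_lintegral_ofReal (hqS.const_mul _)
          (ae_of_all _ fun v => mul_nonneg (Real.rpow_nonneg hρ _) (hq_nonneg _))
    _ ≤ ∫⁻ v in S, ENNReal.ofReal (q (A v) * ‖A v‖ ^ (-s)) ∂ν := by
        refine setLIntegral_mono (hmeas.comp hA.measurable) fun v hv =>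
          ENNReal.ofReal_le_ofReal ?_
        rcases eq_or_ne (A v) 0 with h0 | h0
        · simp [h0, hq_zero]
        · rw [mul_comm]
          exact mul_le_mul_of_nonneg_left
            (Real.rpow_le_rpow_of_nonpos (norm_pos_iff.mpr h0) (hAS v hv) (neg_nonpos.mpr hs))
            (hq_nonneg _)
    _ ≤ ∫⁻ v, ENNReal.ofReal (q (A v) * ‖A v‖ ^ (-s)) ∂ν := setLIntegral_le_lintegral _ _
    _ = ∫⁻ z, ENNReal.ofReal (q z * ‖z‖ ^ (-s)) ∂μ := hA.lintegral_comp hmeas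

variable {E : Type*} [NormedAddCommGroup E] [InnerProductSpace ℝ E] [CompleteSpace E]

lemma ContDiff.continuous_gradient {f : E → ℝ} (hf : ContDiff ℝ 1 f) :
    Continuous (gradient f) :=
  (InnerProductSpace.toDual ℝ E).symm.continuous.comp (hf.continuous_fderiv one_ne_zero)

lemma integral_cube_norm_gradient_sub_sq_ge {m : ℕ} {f : E → ℝ} (hf : ContDiff ℝ 1 f)
    {B R : ℝ} (hfB : ∀ y, |f y| ≤ B) (hR : 0 ≤ R) (x : E) (A : (Fin (m + 1) → ℝ) →L[ℝ] E)
    (hA : ‖gradient f x‖ • A (Pi.single 0 1) = gradient f x) :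
    ‖gradient f x‖ * (3 / 4 * ‖gradient f x‖ * (2 * R) ^ (m + 1) - 2 * B * (2 * R) ^ m) ≤
      ∫ v in cube (m + 1) R, ‖gradient f (x + A v) - gradient f x‖ ^ 2 := by
  set G := ‖gradient f x‖
  let g := fun v => f (x + A v)
  have hg : ContDiff ℝ 1 g := hf.comp (contDiff_const.add A.contDiff)
  have hderiv : ∀ v,
      G * fderiv ℝ g v (Pi.single 0 1) = ⟪gradient f (x + A v), gradient f x⟫ := by
    intro v
    have hfd : HasFDerivAt g ((fderiv ℝ f (x + A v)).comp A) v :=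
      (hf.differentiable one_ne_zero _).hasFDerivAt.comp v (A.hasFDerivAt.const_add x)
    rw [hfd.fderiv, ContinuousLinearMap.comp_apply, ← inner_gradient_left, ← inner_smul_right, hA]
  have hdiv := integral_cube_fderiv_le hg (fun v => hfB (x + A v)) hR 0
  have hcont : Continuous fun v => gradient f (x + A v) :=
    hf.continuous_gradient.comp (by fun_prop)
  have hint : ∀ {h : (Fin (m + 1) → ℝ) → ℝ}, Continuous h → IntegrableOn h (cube (m + 1) R) :=
    fun hh => hh.continuousOn.integrableOn_compact isCompact_Icc
  calc G * (3 / 4 * G * (2 * R) ^ (m + 1) - 2 * B * (2 * R) ^ m)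
      ≤ 3 / 4 * G ^ 2 * (2 * R) ^ (m + 1) -
          G * ∫ v in cube (m + 1) R, fderiv ℝ g v (Pi.single 0 1) := by
        nlinarith [mul_le_mul_of_nonneg_left hdiv (norm_nonneg (gradient f x))]
    _ = ∫ v in cube (m + 1) R, (3 / 4 * G ^ 2 - ⟪gradient f (x + A v), gradient f x⟫) := by
        simp_rw [← hderiv]
        rw [integral_sub, integral_const_mul G, setIntegral_const, volume_real_cube _ hR,
          smul_eq_mul]
        · ring
        · exact integrableOn_const (volume_cube_lt_top _ _).ne
        · exact (hint ((hg.continuous_fderiv one_ne_zero).clm_apply continuous_const)).const_mul _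
    _ ≤ ∫ v in cube (m + 1) R, ‖gradient f (x + A v) - gradient f x‖ ^ 2 :=
        setIntegral_mono_on (hint (by fun_prop)) (hint (by fun_prop)) measurableSet_Icc
          fun v _ => three_quarters_sq_sub_inner_le_norm_sub_sq _ _

noncomputable def constantinVicolConst (n : ℕ) (α : ℝ) : ℝ :=
  √n ^ (-(n + α)) * 2 ^ ((n : ℝ) - 2 - α)

lemma constantinVicolConst_pos (n : ℕ) (α : ℝ) (hn : n ≠ 0) : 0 < constantinVicolConst n α := by
  have : (0 : ℝ) < √n := by positivity
  unfold constantinVicolConst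
  positivity

lemma constantinVicolConst_mul_div_eq (m : ℕ) (α : ℝ) {B G : ℝ} (hB : 0 < B) (hG : 0 < G) :
    constantinVicolConst (m + 1) α * G ^ (2 + α) / B ^ α =
      (√(m + 1 : ℕ) * (2 * B / G)) ^ (-((m + 1 : ℕ) + α)) *
        (G * (3 / 4 * G * (2 * (2 * B / G)) ^ (m + 1) - 2 * B * (2 * (2 * B / G)) ^ m)) := by
  set R := 2 * B / G with hR_def
  have hR : 0 < R := by positivity
  have hs : (0 : ℝ) < √(m + 1 : ℕ) := by positivity
  have hGR : G * R = 2 * B := by rw [hR_def]; field_simp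
  have hinner :
      G * (3 / 4 * G * (2 * R) ^ (m + 1) - 2 * B * (2 * R) ^ m) = B * G * (2 * R) ^ m := by
    rw [pow_succ]; linear_combination (3 / 2 * G * (2 * R) ^ m) * hGR
  have hlogR : Real.log R = Real.log 2 + Real.log B - Real.log G := by
    rw [hR_def, Real.log_div (by positivity) hG.ne', Real.log_mul two_ne_zero hB.ne']
  rw [hinner, constantinVicolConst, ← Real.rpow_natCast (2 * R) m,
    Real.rpow_def_of_pos hs, Real.rpow_def_of_pos two_pos, Real.rpow_def_of_pos hG,
    Real.rpow_def_of_pos hB, Real.rpow_def_of_pos (mul_pos hs hR),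
    Real.rpow_def_of_pos (by positivity : (0 : ℝ) < 2 * R),
    Real.log_mul hs.ne' hR.ne', Real.log_mul two_ne_zero hR.ne', hlogR,
    div_eq_iff (Real.exp_pos _).ne']
  nth_rewrite 2 [← Real.exp_log hB]
  nth_rewrite 3 [← Real.exp_log hG]
  simp only [← Real.exp_add]
  congr 1
  push_cast
  ring

theorem stmt9_general (n : ℕ) (hn : 1 ≤ n) (α : ℝ) (hα0 : 0 < α) :
    ∃ c : ℝ, 0 < c ∧
      ∀ f : EuclideanSpace ℝ (Fin n) → ℝ, ContDiff ℝ 1 f →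
        (∃ B : ℝ, ∀ x, |f x| ≤ B) → (0 < ⨆ x, |f x|) →
        ∀ x : EuclideanSpace ℝ (Fin n),
          ENNReal.ofReal (c * ‖gradient f x‖ ^ (2 + α) / (⨆ y, |f y|) ^ α) ≤
            ∫⁻ z, ENNReal.ofReal
              (‖gradient f (x + z) - gradient f x‖ ^ 2 * ‖z‖ ^ (-((n : ℝ) + α))) := by
  obtain ⟨m, rfl⟩ : ∃ m, n = m + 1 := ⟨n - 1, by omega⟩
  refine ⟨constantinVicolConst (m + 1) α, constantinVicolConst_pos _ α m.succ_ne_zero, ?_⟩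
  rintro f hf ⟨C, hC⟩ hB x
  set B := ⨆ y, |f y|
  have hfB : ∀ y, |f y| ≤ B := le_ciSup ⟨C, forall_mem_range.2 hC⟩
  rcases (norm_nonneg (gradient f x)).eq_or_lt with hG | hG
  · simp [← hG, Real.zero_rpow (by positivity : (2 : ℝ) + α ≠ 0)]
  obtain ⟨A, hA_vol, hA_norm, hA⟩ :=
    exists_measurePreserving_toLp_map_single (m + 1) (gradient f x) 0
  have hR : 0 ≤ 2 * B / ‖gradient f x‖ := by positivity
  have hcont : Continuous fun z => ‖gradient f (x + z) - gradient f x‖ ^ 2 := by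
    have := hf.continuous_gradient
    fun_prop
  rw [constantinVicolConst_mul_div_eq m α hB hG]
  refine (ofReal_rpow_neg_mul_setIntegral_le_lintegral hA_vol (by positivity) (by positivity)
    (fun v hv => (hA_norm v).trans_le (norm_toLp_le_of_mem_cube hR hv)) hcont.measurable
    (fun _ => by positivity) (by simp)
    ((hcont.comp A.continuous).continuousOn.integrableOn_compact isCompact_Icc)).trans' ?_
  exact ENNReal.ofReal_le_ofReal (mul_le_mul_of_nonneg_left
    (integral_cube_norm_gradient_sub_sq_ge hf hfB hR x A hA) (by positivity))

/-- Constantin–Vicol nonlinear maximum principle: there is `c = c(n,α) > 0` with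
`D_α(∇f)(x) ≥ c |∇f(x)|^{2+α} / ‖f‖_∞^α` for every bounded `C¹` function `f` with
`‖f‖_∞ > 0`. -/
theorem stmt9 (n : ℕ) (hn : 1 ≤ n) (α : ℝ) (hα0 : 0 < α) (hα2 : α < 2) :
    ∃ c : ℝ, 0 < c ∧
      ∀ f : EuclideanSpace ℝ (Fin n) → ℝ, ContDiff ℝ 1 f →
        (∃ B : ℝ, ∀ x, |f x| ≤ B) → (0 < ⨆ x, |f x|) →
        ∀ x : EuclideanSpace ℝ (Fin n),
          ENNReal.ofReal (c * ‖gradient f x‖ ^ (2 + α) / (⨆ y, |f y|) ^ α) ≤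
            ∫⁻ z, ENNReal.ofReal
              (‖gradient f (x + z) - gradient f x‖ ^ 2 * ‖z‖ ^ (-((n : ℝ) + α))) :=
  stmt9_general n hn α hα0
end

section
/- Let n ≥ 1 and α ∈ (0, 2). There exists a constant C = C(n, α) > 0 such that for every C¹ function u : ℝⁿ → ℝ, every bounded measurable g : ℝⁿ → ℝⁿ, every x ∈ ℝⁿ and every r > 0: ∫_{|z|<r} |u(x+z) − u(x) − ∇u(x)·z| |z|^{−(n+α)} |g(x+z)| dz ≤ C ‖g‖_∞ (D_α(∇u)(x))^{1/2} r^{1−α/2}, where D_α(∇u)(x) := ∫_{ℝⁿ} |∇u(x+z) − ∇u(x)|² |z|^{−(n+α)} dz is assumed finite. -/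
/-!
Write the Taylor remainder as `∫₀¹ ⟪∇u(x+tz) - ∇u(x), z⟫ dt` and bound `|g|` by `G`; by Tonelli
it suffices to bound, for each `t ∈ (0, 1]`, the integral of `|∇u(x+tz) - ∇u(x)| |z|^{1-n-α}`
over `|z| < r`. Cauchy–Schwarz with the weights `|z|^{-(n+α)/2}` and `|z|^{1-(n+α)/2}` bounds
it by `(t^α D)^{1/2} (∫_{|z|<r} |z|^{2-n-α})^{1/2}`, the factor `t^α ≤ 1` coming from the
substitution `w = tz`. The last integral is `r^{2-α}` times its value on the unit ball, which is
finite because `2 - n - α > -n`.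
-/

open MeasureTheory Metric Set Module
open scoped ENNReal RealInnerProductSpace

theorem ENNReal.ofReal_mul_rpow_half_mul_rpow_half (a : ℝ) {b c : ℝ} (hb : 0 ≤ b) (hc : 0 ≤ c) :
    ENNReal.ofReal a * ENNReal.ofReal b ^ (1 / 2 : ℝ) * ENNReal.ofReal c ^ (1 / 2 : ℝ) =
      ENNReal.ofReal (a * √b * √c) := by
  rw [ENNReal.ofReal_rpow_of_nonneg hb (by norm_num),
    ENNReal.ofReal_rpow_of_nonneg hc (by norm_num), ← Real.sqrt_eq_rpow, ← Real.sqrt_eq_rpow,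
    ← ENNReal.ofReal_mul' (Real.sqrt_nonneg _),
    ← ENNReal.ofReal_mul' (Real.sqrt_nonneg _)]

section HaarScaling

variable {E : Type*} [NormedAddCommGroup E] [NormedSpace ℝ E] [FiniteDimensional ℝ E]
  [MeasurableSpace E] [BorelSpace E] (μ : Measure E) [μ.IsAddHaarMeasure]

theorem lintegral_comp_smul_of_pos (f : E → ℝ≥0∞) {R : ℝ} (hR : 0 < R) :
    ∫⁻ x, f (R • x) ∂μ =
      ENNReal.ofReal (R ^ finrank ℝ E)⁻¹ * ∫⁻ x, f x ∂μ := by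
  rw [← smul_eq_mul, ← lintegral_smul_measure, ← abs_of_pos (inv_pos.2 (pow_pos hR _)),
    ← Measure.map_addHaar_smul μ hR.ne']
  exact (lintegral_map_equiv f
    (Homeomorph.smul (Units.mk0 R hR.ne')).toMeasurableEquiv).symm

theorem lintegral_comp_inv_smul_of_pos (f : E → ℝ≥0∞) {R : ℝ} (hR : 0 < R) :
    ∫⁻ x, f (R⁻¹ • x) ∂μ =
      ENNReal.ofReal (R ^ finrank ℝ E) * ∫⁻ x, f x ∂μ := by
  rw [lintegral_comp_smul_of_pos μ f (inv_pos.2 hR), inv_pow, inv_inv]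

theorem setLIntegral_ball_rpow_norm {r : ℝ} (hr : 0 < r) (p : ℝ) :
    ∫⁻ z in ball (0 : E) r, ENNReal.ofReal (‖z‖ ^ p) ∂μ =
      ENNReal.ofReal (r ^ (finrank ℝ E + p)) *
        ∫⁻ z in ball (0 : E) 1, ENNReal.ofReal (‖z‖ ^ p) ∂μ := by
  have hind : ∀ z : E, (ball (0 : E) 1).indicator (fun w => ENNReal.ofReal (‖r • w‖ ^ p))
      (r⁻¹ • z) = (ball (0 : E) r).indicator (fun w => ENNReal.ofReal (‖w‖ ^ p)) z := by
    intro z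
    have hmem : r⁻¹ • z ∈ ball (0 : E) 1 ↔ z ∈ ball (0 : E) r := by
      rw [mem_ball_zero_iff, mem_ball_zero_iff, norm_smul, norm_inv, Real.norm_of_nonneg hr.le,
        inv_mul_lt_iff₀ hr, mul_one]
    by_cases hz : z ∈ ball (0 : E) r
    · rw [indicator_of_mem (hmem.2 hz), indicator_of_mem hz, smul_inv_smul₀ hr.ne']
    · rw [indicator_of_notMem (mt hmem.1 hz), indicator_of_notMem hz]
  have hnorm : ∀ w : E,
      ENNReal.ofReal (‖r • w‖ ^ p) = ENNReal.ofReal (r ^ p) * ENNReal.ofReal (‖w‖ ^ p) := by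
    intro w
    rw [norm_smul, Real.norm_of_nonneg hr.le, Real.mul_rpow hr.le (norm_nonneg w),
      ENNReal.ofReal_mul (by positivity)]
  rw [← lintegral_indicator measurableSet_ball, ← lintegral_congr hind,
    lintegral_comp_inv_smul_of_pos μ _ hr, lintegral_indicator measurableSet_ball,
    setLIntegral_congr_fun measurableSet_ball (fun w _ => hnorm w),
    lintegral_const_mul' _ _ ENNReal.ofReal_ne_top, ← mul_assoc,
    ← ENNReal.ofReal_mul (by positivity), ← Real.rpow_natCast, ← Real.rpow_add hr]

theorem setLIntegral_unitBall_rpow_norm_lt_top [Nontrivial E] {p : ℝ}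
    (hp : -(finrank ℝ E : ℝ) < p) :
    ∫⁻ z in ball (0 : E) 1, ENNReal.ofReal (‖z‖ ^ p) ∂μ < ∞ := by
  refine Integrable.lintegral_lt_top ?_
  rw [← IntegrableOn, integrableOn_fun_norm_addHaar μ (f := fun y => y ^ p)]
  have hd : 1 ≤ finrank ℝ E := finrank_pos
  refine ((intervalIntegral.integrableOn_Ioo_rpow_iff zero_lt_one).2
    (?_ : -1 < ((finrank ℝ E - 1 : ℕ) : ℝ) + p)).congr_fun (fun y hy => ?_) measurableSet_Ioo
  · push_cast [hd]; linarith
  · dsimp only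
    rw [Real.rpow_add hy.1, Real.rpow_natCast, smul_eq_mul]

theorem lintegral_comp_smul_sq_mul_rpow_le {ψ : E → ℝ} {β t : ℝ} (hdβ : (finrank ℝ E : ℝ) ≤ β)
    (ht0 : 0 < t) (ht1 : t ≤ 1) :
    ∫⁻ z, ENNReal.ofReal (ψ (t • z) ^ 2 * ‖z‖ ^ (-β)) ∂μ ≤
      ∫⁻ w, ENNReal.ofReal (ψ w ^ 2 * ‖w‖ ^ (-β)) ∂μ := by
  have hpt : ∀ z : E, ENNReal.ofReal (ψ (t • z) ^ 2 * ‖z‖ ^ (-β)) =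
      ENNReal.ofReal (t ^ β) * ENNReal.ofReal (ψ (t • z) ^ 2 * ‖t • z‖ ^ (-β)) := by
    intro z
    rw [← ENNReal.ofReal_mul (by positivity), norm_smul, Real.norm_of_nonneg ht0.le,
      Real.mul_rpow ht0.le (norm_nonneg z), Real.rpow_neg ht0.le]
    field_simp
  rw [lintegral_congr hpt, lintegral_const_mul' _ _ ENNReal.ofReal_ne_top,
    lintegral_comp_smul_of_pos μ (fun w => ENNReal.ofReal (ψ w ^ 2 * ‖w‖ ^ (-β))) ht0,
    ← mul_assoc, ← ENNReal.ofReal_mul (by positivity)]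
  refine mul_le_of_le_one_left zero_le (ENNReal.ofReal_le_one.2 ?_)
  rw [← Real.rpow_natCast, ← Real.rpow_neg ht0.le, ← Real.rpow_add ht0]
  exact Real.rpow_le_one ht0.le ht1 (by linarith)

theorem setLIntegral_ball_comp_smul_mul_rpow_le {ψ : E → ℝ} (hψm : Measurable ψ)
    (hψ : ∀ w, 0 ≤ ψ w) {β t : ℝ} (hdβ : (finrank ℝ E : ℝ) ≤ β) (hβ : β ≠ 1) (ht0 : 0 < t)
    (ht1 : t ≤ 1) (r : ℝ) :
    ∫⁻ z in ball (0 : E) r, ENNReal.ofReal (ψ (t • z) * ‖z‖ ^ (1 - β)) ∂μ ≤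
      (∫⁻ w, ENNReal.ofReal (ψ w ^ 2 * ‖w‖ ^ (-β)) ∂μ) ^ (1 / 2 : ℝ) *
        (∫⁻ z in ball (0 : E) r, ENNReal.ofReal (‖z‖ ^ (2 - β)) ∂μ) ^ (1 / 2 : ℝ) := by
  set f : E → ℝ≥0∞ := fun z => ENNReal.ofReal (ψ (t • z) * ‖z‖ ^ (-β / 2))
  set g : E → ℝ≥0∞ := fun z => ENNReal.ofReal (‖z‖ ^ (1 - β / 2))
  have hfg : ∀ z, ENNReal.ofReal (ψ (t • z) * ‖z‖ ^ (1 - β)) = f z * g z := by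
    intro z
    rw [← ENNReal.ofReal_mul (by have := hψ (t • z); positivity), mul_assoc,
      ← Real.rpow_add' (norm_nonneg z) (by contrapose! hβ; linarith)]
    ring_nf
  have hf : ∀ z, f z ^ (2 : ℝ) = ENNReal.ofReal (ψ (t • z) ^ 2 * ‖z‖ ^ (-β)) := by
    intro z
    rw [ENNReal.rpow_two, ← ENNReal.ofReal_pow (by have := hψ (t • z); positivity), mul_pow,
      ← Real.rpow_mul_natCast (norm_nonneg z)]
    norm_num
  have hg : ∀ z, g z ^ (2 : ℝ) = ENNReal.ofReal (‖z‖ ^ (2 - β)) := by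
    intro z
    rw [ENNReal.rpow_two, ← ENNReal.ofReal_pow (by positivity),
      ← Real.rpow_mul_natCast (norm_nonneg z)]
    ring_nf
  calc ∫⁻ z in ball (0 : E) r, ENNReal.ofReal (ψ (t • z) * ‖z‖ ^ (1 - β)) ∂μ
      = ∫⁻ z in ball (0 : E) r, (f * g) z ∂μ := lintegral_congr hfg
    _ ≤ (∫⁻ z in ball (0 : E) r, f z ^ (2 : ℝ) ∂μ) ^ (1 / 2 : ℝ) *
          (∫⁻ z in ball (0 : E) r, g z ^ (2 : ℝ) ∂μ) ^ (1 / 2 : ℝ) :=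
        ENNReal.lintegral_mul_le_Lp_mul_Lq _ .two_two (by fun_prop) (by fun_prop)
    _ ≤ _ := by
        simp only [hf, hg]
        gcongr ?_ ^ _ * _
        exact (setLIntegral_le_lintegral _ _).trans
          (lintegral_comp_smul_sq_mul_rpow_le μ hdβ ht0 ht1)

end HaarScaling

section Taylor

variable {E F : Type*} [NormedAddCommGroup E] [InnerProductSpace ℝ E] [CompleteSpace E]
  [NormedAddCommGroup F] {u : E → ℝ}

theorem ContDiff.continuous_gradient_s11 (hu : ContDiff ℝ 1 u) :
    Continuous (gradient u) :=
  (InnerProductSpace.toDual ℝ E).symm.continuous.comp (hu.continuous_fderiv one_ne_zero)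

theorem abs_sub_sub_inner_gradient_le_integral (hu : ContDiff ℝ 1 u) (x z : E) :
    |u (x + z) - u x - ⟪gradient u x, z⟫| ≤
      ∫ t in (0 : ℝ)..1, ‖gradient u (x + t • z) - gradient u x‖ * ‖z‖ := by
  have hgrad := hu.continuous_gradient_s11
  have hderiv : ∀ t ∈ uIcc (0 : ℝ) 1,
      HasDerivAt (fun τ : ℝ => u (x + τ • z) - τ * ⟪gradient u x, z⟫)
        ⟪gradient u (x + t • z) - gradient u x, z⟫ t := by
    intro t _
    have hline : HasDerivAt (fun τ : ℝ => x + τ • z) z t := by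
      simpa using ((hasDerivAt_id t).smul_const z).const_add x
    have hcomp : HasDerivAt (fun τ : ℝ => u (x + τ • z)) ⟪gradient u (x + t • z), z⟫ t :=
      (hu.differentiable one_ne_zero _).hasGradientAt.hasFDerivAt.comp_hasDerivAt t hline
    rw [inner_sub_left]
    exact hcomp.sub (hasDerivAt_mul_const _)
  have hremainder : u (x + z) - u x - ⟪gradient u x, z⟫ =
      ∫ t in (0 : ℝ)..1, ⟪gradient u (x + t • z) - gradient u x, z⟫ := by
    rw [intervalIntegral.integral_eq_sub_of_hasDerivAt hderiv
      (Continuous.intervalIntegrable (by fun_prop) 0 1)]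
    simp only [one_smul, zero_smul, add_zero, one_mul, zero_mul, sub_zero]
    ring
  rw [hremainder, ← Real.norm_eq_abs]
  exact intervalIntegral.norm_integral_le_of_norm_le zero_le_one
    (.of_forall fun t _ => norm_inner_le_norm _ _)
    (Continuous.intervalIntegrable (by fun_prop) 0 1)

theorem ofReal_abs_sub_sub_inner_gradient_le_lintegral (hu : ContDiff ℝ 1 u) (x z : E) :
    ENNReal.ofReal |u (x + z) - u x - ⟪gradient u x, z⟫| ≤
      ∫⁻ t in Ioc (0 : ℝ) 1, ENNReal.ofReal (‖gradient u (x + t • z) - gradient u x‖ * ‖z‖) := by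
  have hgrad := hu.continuous_gradient_s11
  rw [← ofReal_integral_eq_lintegral_ofReal (Continuous.integrableOn_Ioc (by fun_prop))
    (.of_forall fun t => by positivity), ← intervalIntegral.integral_of_le zero_le_one]
  exact ENNReal.ofReal_le_ofReal (abs_sub_sub_inner_gradient_le_integral hu x z)

theorem ofReal_abs_sub_sub_inner_gradient_mul_le_lintegral (hu : ContDiff ℝ 1 u) {g : E → F}
    {G β : ℝ} (hG : ∀ y, ‖g y‖ ≤ G) (hβ : β ≠ 1) (x z : E) :
    ENNReal.ofReal (|u (x + z) - u x - ⟪gradient u x, z⟫| * ‖z‖ ^ (-β) * ‖g (x + z)‖) ≤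
      ENNReal.ofReal G * ∫⁻ t in Ioc (0 : ℝ) 1,
        ENNReal.ofReal (‖gradient u (x + t • z) - gradient u x‖ * ‖z‖ ^ (1 - β)) := by
  have hnorm : ∀ t : ℝ, ENNReal.ofReal (‖gradient u (x + t • z) - gradient u x‖ * ‖z‖) *
      ENNReal.ofReal (‖z‖ ^ (-β)) =
        ENNReal.ofReal (‖gradient u (x + t • z) - gradient u x‖ * ‖z‖ ^ (1 - β)) := by
    intro t
    rw [← ENNReal.ofReal_mul (by positivity), mul_assoc, show 1 - β = 1 + -β by ring,
      Real.rpow_add' (norm_nonneg z) (by intro h; apply hβ; linarith), Real.rpow_one]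
  calc ENNReal.ofReal (|u (x + z) - u x - ⟪gradient u x, z⟫| * ‖z‖ ^ (-β) * ‖g (x + z)‖)
      ≤ ENNReal.ofReal (|u (x + z) - u x - ⟪gradient u x, z⟫| * ‖z‖ ^ (-β) * G) :=
        ENNReal.ofReal_le_ofReal (mul_le_mul_of_nonneg_left (hG _) (by positivity))
    _ = ENNReal.ofReal G * (ENNReal.ofReal |u (x + z) - u x - ⟪gradient u x, z⟫| *
          ENNReal.ofReal (‖z‖ ^ (-β))) := by
        rw [ENNReal.ofReal_mul (by positivity), ENNReal.ofReal_mul (by positivity), mul_comm]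
    _ ≤ ENNReal.ofReal G * ((∫⁻ t in Ioc (0 : ℝ) 1,
          ENNReal.ofReal (‖gradient u (x + t • z) - gradient u x‖ * ‖z‖)) *
            ENNReal.ofReal (‖z‖ ^ (-β))) := by
        gcongr
        exact ofReal_abs_sub_sub_inner_gradient_le_lintegral hu x z
    _ = _ := by
        rw [← lintegral_mul_const' _ _ ENNReal.ofReal_ne_top]
        simp only [hnorm]

end Taylor

section SmallScale

variable {E F : Type*} [NormedAddCommGroup E] [InnerProductSpace ℝ E] [FiniteDimensional ℝ E]
  [MeasurableSpace E] [BorelSpace E] [NormedAddCommGroup F] {u : E → ℝ} {g : E → F} {G : ℝ}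

theorem setLIntegral_ball_taylor_remainder_le_lintegral_Ioc (μ : Measure E) [SFinite μ]
    (hu : ContDiff ℝ 1 u) (hG : ∀ y, ‖g y‖ ≤ G) {β : ℝ} (hβ : β ≠ 1) (x : E) (r : ℝ) :
    ∫⁻ z in ball (0 : E) r,
        ENNReal.ofReal (|u (x + z) - u x - ⟪gradient u x, z⟫| * ‖z‖ ^ (-β) * ‖g (x + z)‖) ∂μ ≤
      ENNReal.ofReal G * ∫⁻ t in Ioc (0 : ℝ) 1, ∫⁻ z in ball (0 : E) r,
        ENNReal.ofReal (‖gradient u (x + t • z) - gradient u x‖ * ‖z‖ ^ (1 - β)) ∂μ := by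
  have hgrad := hu.continuous_gradient_s11
  calc _ ≤ ∫⁻ z in ball (0 : E) r, ENNReal.ofReal G * (∫⁻ t in Ioc (0 : ℝ) 1,
          ENNReal.ofReal (‖gradient u (x + t • z) - gradient u x‖ * ‖z‖ ^ (1 - β))) ∂μ :=
        lintegral_mono (ofReal_abs_sub_sub_inner_gradient_mul_le_lintegral hu hG hβ x)
    _ = _ := by
        rw [lintegral_const_mul' _ _ ENNReal.ofReal_ne_top, lintegral_lintegral_swap]
        exact Measurable.aemeasurable (by fun_prop)

theorem setLIntegral_ball_taylor_remainder_le (μ : Measure E) [μ.IsAddHaarMeasure]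
    (hu : ContDiff ℝ 1 u) (hG : ∀ y, ‖g y‖ ≤ G)
    {α : ℝ} (hα : 0 ≤ α) (hα1 : (finrank ℝ E : ℝ) + α ≠ 1) (x : E) {r : ℝ} (hr : 0 < r) :
    ∫⁻ z in ball (0 : E) r, ENNReal.ofReal (|u (x + z) - u x - ⟪gradient u x, z⟫| *
        ‖z‖ ^ (-((finrank ℝ E : ℝ) + α)) * ‖g (x + z)‖) ∂μ ≤
      ENNReal.ofReal G * (∫⁻ w, ENNReal.ofReal (‖gradient u (x + w) - gradient u x‖ ^ 2 *
          ‖w‖ ^ (-((finrank ℝ E : ℝ) + α))) ∂μ) ^ (1 / 2 : ℝ) *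
        (ENNReal.ofReal (r ^ (2 - α)) * ∫⁻ z in ball (0 : E) 1,
          ENNReal.ofReal (‖z‖ ^ (2 - ((finrank ℝ E : ℝ) + α))) ∂μ) ^ (1 / 2 : ℝ) := by
  have hgrad := hu.continuous_gradient_s11
  calc _ ≤ _ := setLIntegral_ball_taylor_remainder_le_lintegral_Ioc μ hu hG hα1 x r
    _ ≤ ENNReal.ofReal G * ∫⁻ t in Ioc (0 : ℝ) 1,
          (∫⁻ w, ENNReal.ofReal (‖gradient u (x + w) - gradient u x‖ ^ 2 *
            ‖w‖ ^ (-((finrank ℝ E : ℝ) + α))) ∂μ) ^ (1 / 2 : ℝ) *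
          (∫⁻ z in ball (0 : E) r,
            ENNReal.ofReal (‖z‖ ^ (2 - ((finrank ℝ E : ℝ) + α))) ∂μ) ^ (1 / 2 : ℝ) := by
        gcongr _ * ?_
        exact setLIntegral_mono' measurableSet_Ioc fun t ht =>
          setLIntegral_ball_comp_smul_mul_rpow_le μ (by fun_prop) (fun _ => norm_nonneg _)
            (by linarith) hα1 ht.1 ht.2 r
    _ = _ := by
        rw [setLIntegral_const, Real.volume_Ioc, sub_zero, ENNReal.ofReal_one, mul_one,
          ← mul_assoc, setLIntegral_ball_rpow_norm μ hr,
          show (finrank ℝ E : ℝ) + (2 - (finrank ℝ E + α)) = 2 - α by ring]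

end SmallScale

/-- Small-scale estimate (term `I₁`): the Taylor remainder integral over `|z| < r`
against a bounded field `g` is controlled by `C ‖g‖_∞ D_α(∇u)(x)^{1/2} r^{1−α/2}`. -/
theorem stmt11 (n : ℕ) (hn : 1 ≤ n) (α : ℝ) (hα0 : 0 < α) (hα2 : α < 2) :
    ∃ C : ℝ, 0 < C ∧
      ∀ u : EuclideanSpace ℝ (Fin n) → ℝ, ContDiff ℝ 1 u →
      ∀ g : EuclideanSpace ℝ (Fin n) → EuclideanSpace ℝ (Fin n), Measurable g →
      ∀ G : ℝ, (∀ y, ‖g y‖ ≤ G) →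
      ∀ x : EuclideanSpace ℝ (Fin n), ∀ r : ℝ, 0 < r →
      Integrable (fun z : EuclideanSpace ℝ (Fin n) =>
        ‖gradient u (x + z) - gradient u x‖ ^ 2 * ‖z‖ ^ (-((n : ℝ) + α))) →
      (∫⁻ z in Metric.ball (0 : EuclideanSpace ℝ (Fin n)) r,
          ENNReal.ofReal
            (|u (x + z) - u x - ⟪gradient u x, z⟫| * ‖z‖ ^ (-((n : ℝ) + α)) * ‖g (x + z)‖)) ≤
        ENNReal.ofReal (C * G *
          Real.sqrt (∫ z : EuclideanSpace ℝ (Fin n),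
            ‖gradient u (x + z) - gradient u x‖ ^ 2 * ‖z‖ ^ (-((n : ℝ) + α))) *
          r ^ (1 - α / 2)) := by
  have hd : finrank ℝ (EuclideanSpace ℝ (Fin n)) = n := finrank_euclideanSpace_fin
  have : Nontrivial (EuclideanSpace ℝ (Fin n)) :=
    Module.nontrivial_of_finrank_pos (R := ℝ) (by omega)
  have hα1 : (n : ℝ) + α ≠ 1 := by
    have : (1 : ℝ) ≤ n := by exact_mod_cast hn
    linarith
  have hK : ∫⁻ z in ball (0 : EuclideanSpace ℝ (Fin n)) 1,
      ENNReal.ofReal (‖z‖ ^ (2 - ((n : ℝ) + α))) < ∞ :=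
    setLIntegral_unitBall_rpow_norm_lt_top volume (by rw [hd]; linarith)
  set κ := (∫⁻ z in ball (0 : EuclideanSpace ℝ (Fin n)) 1,
      ENNReal.ofReal (‖z‖ ^ (2 - ((n : ℝ) + α)))).toReal
  refine ⟨√κ + 1, by positivity, fun u hu g _ G hG x r hr hInt => ?_⟩
  have hG0 : 0 ≤ G := (norm_nonneg _).trans (hG 0)
  have hbound := setLIntegral_ball_taylor_remainder_le volume hu hG hα0.le
    (by rw [hd]; exact hα1) x hr
  rw [hd, ← ofReal_integral_eq_lintegral_ofReal hInt (.of_forall fun _ => by positivity),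
    ← ENNReal.ofReal_toReal hK.ne, ← ENNReal.ofReal_mul (by positivity),
    ENNReal.ofReal_mul_rpow_half_mul_rpow_half _ (integral_nonneg fun _ => by positivity)
      (by positivity), Real.sqrt_mul (by positivity), Real.sqrt_eq_rpow (r ^ (2 - α)),
    ← Real.rpow_mul hr.le, show (2 - α) * (1 / 2) = 1 - α / 2 by ring] at hbound
  refine hbound.trans (ENNReal.ofReal_le_ofReal ?_)
  have hP : 0 ≤ G * √(∫ z, ‖gradient u (x + z) - gradient u x‖ ^ 2 *
      ‖z‖ ^ (-((n : ℝ) + α))) * r ^ (1 - α / 2) := by positivity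
  nlinarith
end

section
/- Let n ≥ 1, α ∈ (1, 2), and γ ∈ (0, 1). There exists a constant C = C(n, α, γ) > 0 such that for every bounded C¹ function ρ : ℝⁿ → ℝ with bounded gradient and finite γ-Hölder seminorm [ρ]_γ := sup_{x≠y} |ρ(x) − ρ(y)|/|x−y|^γ, every x ∈ ℝⁿ and every r ∈ (0, 1): | ∫_{|z|>r} (z / |z|^{n+α}) · ∇ρ(x+z) dz | ≤ C ( ‖∇ρ‖_∞ + (‖ρ‖_∞ + [ρ]_γ) r^{γ−α} ). -/
/-
In polar coordinates `z = t • ω` the Jacobian `t ^ (n - 1)` turns the kernel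
`‖z‖ ^ (-(n + α)) • z` into `t ^ (-α) • ω`, so the integral is the spherical average of the ray integrals
`∫_{t > r} t ^ (-α) (d/dt) [ρ (x + t • ω) - ρ x] dt`. Integrating by parts along each ray and
using `|ρ (x + t • ω) - ρ x| ≤ H t ^ γ` bounds both the boundary term at `t = r` and the
remaining integral `α ∫_{t > r} t ^ (-α - 1) H t ^ γ dt`, giving `(1 + α / (α - γ)) H r ^ (γ - α)`
for every direction. When an integrand is not integrable its Bochner integral is `0`, so only the
integrable case needs this argument.
-/

open MeasureTheory Set Filter Metric
open scoped RealInnerProductSpace Topology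

theorem abs_rpow_mul_le_of_abs_le {y H γ t : ℝ} (ht : 0 < t) (hy : |y| ≤ H * t ^ γ) (p : ℝ) :
    |t ^ p * y| ≤ H * t ^ (p + γ) := by
  rw [abs_mul, abs_of_nonneg (Real.rpow_nonneg ht.le _), Real.rpow_add ht]
  calc t ^ p * |y| ≤ t ^ p * (H * t ^ γ) := by gcongr
    _ = H * (t ^ p * t ^ γ) := by ring

section Decay

variable {f : ℝ → ℝ} {p γ H r : ℝ}

theorem integrableOn_Ioi_rpow_mul_of_abs_le (hr : 0 < r) (hpγ : p + γ < -1)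
    (hfc : ContinuousOn f (Ioi r)) (hf : ∀ t ∈ Ioi r, |f t| ≤ H * t ^ γ) :
    IntegrableOn (fun t => t ^ p * f t) (Ioi r) := by
  refine ((integrableOn_Ioi_rpow_of_lt hpγ hr).const_mul H).mono' ?_
    ((ae_restrict_iff' measurableSet_Ioi).2 (.of_forall fun t ht =>
      abs_rpow_mul_le_of_abs_le (hr.trans ht) (hf t ht) p))
  refine ContinuousOn.aestronglyMeasurable (fun t ht => ?_) measurableSet_Ioi
  exact ((Real.continuousAt_rpow_const _ _ (.inl (hr.trans ht).ne')).continuousWithinAt).mul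
    (hfc t ht)

theorem abs_integral_Ioi_rpow_mul_le_of_abs_le (hr : 0 < r) (hpγ : p + γ < -1)
    (hf : ∀ t ∈ Ioi r, |f t| ≤ H * t ^ γ) :
    |∫ t in Ioi r, t ^ p * f t| ≤ H * (r ^ (p + γ + 1) / -(p + γ + 1)) := by
  have hdom : ∀ᵐ t ∂volume.restrict (Ioi r), ‖t ^ p * f t‖ ≤ H * t ^ (p + γ) :=
    (ae_restrict_iff' measurableSet_Ioi).2 (.of_forall fun t ht =>
      abs_rpow_mul_le_of_abs_le (hr.trans ht) (hf t ht) p)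
  refine (norm_integral_le_of_norm_le ((integrableOn_Ioi_rpow_of_lt hpγ hr).const_mul H)
    hdom).trans_eq ?_
  rw [integral_const_mul, integral_Ioi_rpow_of_lt hpγ hr, neg_div, div_neg]

end Decay

theorem abs_integral_Ioi_rpow_mul_deriv_le {f f' : ℝ → ℝ} {α γ H r : ℝ} (hα : 0 ≤ α)
    (hγα : γ < α) (hr : 0 < r) (hf' : ∀ t ∈ Ici r, HasDerivAt f (f' t) t)
    (hf : ∀ t ∈ Ici r, |f t| ≤ H * t ^ γ) :
    |∫ t in Ioi r, t ^ (-α) * f' t| ≤ (1 + α / (α - γ)) * H * r ^ (γ - α) := by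
  have hH : 0 ≤ H := nonneg_of_mul_nonneg_left ((abs_nonneg _).trans (hf r self_mem_Ici))
    (Real.rpow_pos_of_pos hr γ)
  have hαγ : 0 < α - γ := by linarith
  by_cases hint : IntegrableOn (fun t => t ^ (-α) * f' t) (Ioi r)
  swap
  · rw [integral_undef hint, abs_zero]; positivity
  have hu : ∀ t ∈ Ici r, HasDerivAt (fun t : ℝ => t ^ (-α)) (-α * t ^ (-α - 1)) t := fun t ht =>
    Real.hasDerivAt_rpow_const (Or.inl (hr.trans_le ht).ne')
  have hf_Ioi : ∀ t ∈ Ioi r, |f t| ≤ H * t ^ γ := fun t ht => hf t (mem_Ici_of_Ioi ht)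
  have hexp : -α - 1 + γ < -1 := by linarith
  have hbulk_int : IntegrableOn (fun t => -α * t ^ (-α - 1) * f t) (Ioi r) := by
    simp_rw [mul_assoc]
    exact (integrableOn_Ioi_rpow_mul_of_abs_le hr hexp
      (fun t ht => (hf' t (mem_Ici_of_Ioi ht)).continuousAt.continuousWithinAt) hf_Ioi).const_mul _
  have hlim : Tendsto (fun t => t ^ (-α) * f t) atTop (𝓝 0) := by
    refine squeeze_zero_norm' ?_ (by simpa using (tendsto_rpow_neg_atTop hαγ).const_mul H)
    filter_upwards [eventually_ge_atTop r] with t ht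
    simpa [neg_add_eq_sub] using abs_rpow_mul_le_of_abs_le (hr.trans_le ht) (hf t ht) (-α)
  have hparts := integral_Ioi_mul_deriv_eq_deriv_mul (fun t ht => hu t (mem_Ici_of_Ioi ht))
    (fun t ht => hf' t (mem_Ici_of_Ioi ht)) hint hbulk_int
    (((hu r self_mem_Ici).continuousAt.mul (hf' r self_mem_Ici).continuousAt).tendsto.mono_left
      nhdsWithin_le_nhds) hlim
  have hboundary : |r ^ (-α) * f r| ≤ H * r ^ (γ - α) := by
    simpa [neg_add_eq_sub] using abs_rpow_mul_le_of_abs_le hr (hf r self_mem_Ici) (-α)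
  have hbulk : |∫ t in Ioi r, -α * t ^ (-α - 1) * f t| ≤ α * (H * (r ^ (γ - α) / (α - γ))) := by
    have := abs_integral_Ioi_rpow_mul_le_of_abs_le hr hexp hf_Ioi
    rw [show -α - 1 + γ + 1 = γ - α by ring, neg_sub] at this
    simp_rw [mul_assoc]
    rw [integral_const_mul, abs_mul, abs_neg, abs_of_nonneg hα]
    exact mul_le_mul_of_nonneg_left this hα
  rw [hparts, zero_sub]
  calc |-(r ^ (-α) * f r) - ∫ t in Ioi r, -α * t ^ (-α - 1) * f t|
      ≤ |r ^ (-α) * f r| + |∫ t in Ioi r, -α * t ^ (-α - 1) * f t| := by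
        rw [← abs_neg (r ^ (-α) * f r)]; exact abs_sub _ _
    _ ≤ H * r ^ (γ - α) + α * (H * (r ^ (γ - α) / (α - γ))) := add_le_add hboundary hbulk
    _ = (1 + α / (α - γ)) * H * r ^ (γ - α) := by field_simp

theorem integral_volumeIoiPow {F : Type*} [NormedAddCommGroup F] [NormedSpace ℝ F] (m : ℕ)
    (h : ℝ → F) :
    ∫ t : Ioi (0 : ℝ), h t ∂Measure.volumeIoiPow m = ∫ t in Ioi (0 : ℝ), t ^ m • h t := by
  simp only [Measure.volumeIoiPow, ENNReal.ofReal]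
  rw [integral_withDensity_eq_integral_smul ((measurable_subtype_coe.pow_const _).real_toNNReal),
    integral_subtype_comap measurableSet_Ioi fun t ↦ Real.toNNReal (t ^ m) • h t,
    setIntegral_congr_fun measurableSet_Ioi fun t ht ↦ ?_]
  rw [NNReal.smul_def, Real.coe_toNNReal _ (pow_nonneg ht.out.le _)]

section Polar

variable {E : Type*} [NormedAddCommGroup E] [NormedSpace ℝ E] [FiniteDimensional ℝ E]
  [MeasurableSpace E] [BorelSpace E] [Nontrivial E] (μ : Measure E) [μ.IsAddHaarMeasure]

theorem abs_integral_le_toSphere_real_mul {f : E → ℝ} {B : ℝ}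
    (hB : ∀ ω : sphere (0 : E) 1,
      |∫ t in Ioi (0 : ℝ), t ^ (Module.finrank ℝ E - 1) * f (t • (ω : E))| ≤ B) :
    |∫ x, f x ∂μ| ≤ μ.toSphere.real univ * B := by
  by_cases hf : Integrable f μ
  swap
  · obtain ⟨ω⟩ :=
      (NormedSpace.sphere_nonempty.2 zero_le_one : (sphere (0 : E) 1).Nonempty).to_subtype
    rw [integral_undef hf, abs_zero]
    exact mul_nonneg measureReal_nonneg ((abs_nonneg _).trans (hB ω))
  set e := homeomorphUnitSphereProd E
  have he := μ.measurePreserving_homeomorphUnitSphereProd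
  set g : sphere (0 : E) 1 × Ioi (0 : ℝ) → ℝ := fun p => f (e.symm p)
  have hge : g ∘ e = fun y : ({0}ᶜ : Set E) => f y := funext fun y => by simp [g]
  have hg : Integrable g (μ.toSphere.prod (.volumeIoiPow (Module.finrank ℝ E - 1))) := by
    rw [← he.integrable_comp_emb e.measurableEmbedding, hge]
    exact (integrableOn_iff_comap_subtypeVal (measurableSet_singleton 0).compl).1 hf.integrableOn
  have hpolar : ∫ x, f x ∂μ = ∫ ω : sphere (0 : E) 1, (∫ t in Ioi (0 : ℝ),
      t ^ (Module.finrank ℝ E - 1) * f (t • (ω : E))) ∂μ.toSphere := calc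
    ∫ x, f x ∂μ = ∫ y : ({0}ᶜ : Set E), f y ∂μ.comap Subtype.val := by
      rw [integral_subtype_comap (measurableSet_singleton 0).compl, restrict_compl_singleton]
    _ = ∫ p, g p ∂μ.toSphere.prod (.volumeIoiPow (Module.finrank ℝ E - 1)) := by
      rw [← he.integral_comp e.measurableEmbedding, ← hge, Function.comp_def]
    _ = _ := by
      rw [integral_prod g hg]
      simp only [g, e, homeomorphUnitSphereProd_symm_apply_coe]
      congr 1 with ω
      exact integral_volumeIoiPow _ fun t => f (t • (ω : E))
  rw [hpolar, mul_comm]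
  exact norm_integral_le_of_norm_le_const (.of_forall fun ω => (Real.norm_eq_abs _).trans_le (hB ω))

end Polar

section Ray

variable {E : Type*} [NormedAddCommGroup E] [InnerProductSpace ℝ E]

theorem HasGradientAt.hasDerivAt_comp_add_smul [CompleteSpace E] {ρ : E → ℝ} {g x v : E} {t : ℝ}
    (h : HasGradientAt ρ g (x + t • v)) :
    HasDerivAt (fun s : ℝ => ρ (x + s • v)) ⟪v, g⟫ t := by
  have hline : HasDerivAt (fun s : ℝ => x + s • v) v t := by
    simpa using ((hasDerivAt_id t).smul_const v).const_add x
  rw [real_inner_comm]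
  exact h.hasFDerivAt.comp_hasDerivAt t hline

theorem setIntegral_Ioi_pow_mul_indicator_inner_norm_rpow_smul {n : ℕ} (hn : 1 ≤ n) {α r : ℝ}
    (hr : 0 ≤ r) {ω : E} (hω : ‖ω‖ = 1) (F : E → E) :
    ∫ t in Ioi (0 : ℝ), t ^ (n - 1) * {z : E | r < ‖z‖}.indicator
        (fun z => ⟪‖z‖ ^ (-((n : ℝ) + α)) • z, F z⟫) (t • ω) =
      ∫ t in Ioi r, t ^ (-α) * ⟪ω, F (t • ω)⟫ := by
  have hexp : ∀ t : ℝ, 0 < t → t ^ (n - 1) * t ^ (-((n : ℝ) + α)) * t = t ^ (-α) := by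
    intro t ht
    rw [← Real.rpow_natCast, Nat.cast_sub hn, ← Real.rpow_add ht, ← Real.rpow_add_one ht.ne']
    congr 1; push_cast; ring
  calc _ = ∫ t in Ioi (0 : ℝ), (Ioi r).indicator (fun t => t ^ (-α) * ⟪ω, F (t • ω)⟫) t := by
        refine setIntegral_congr_fun measurableSet_Ioi fun t (ht : 0 < t) => ?_
        have hnorm : ‖t • ω‖ = t := by rw [norm_smul_of_nonneg ht.le, hω, mul_one]
        by_cases htr : r < t
        · simp only [indicator, mem_ofPred_eq, mem_Ioi, hnorm, htr, if_true, real_inner_smul_left]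
          rw [← hexp t ht]; ring
        · simp [indicator, hnorm, htr]
    _ = _ := by
        rw [integral_indicator measurableSet_Ioi, Measure.restrict_restrict measurableSet_Ioi,
          Ioi_inter_Ioi, sup_eq_left.2 hr]

theorem abs_integral_Ioi_rpow_mul_inner_gradient_le [CompleteSpace E] {ρ : E → ℝ}
    (hρ : Differentiable ℝ ρ) {α γ H r : ℝ} (hα : 0 ≤ α) (hγα : γ < α) (hr : 0 < r)
    (hH : ∀ x y, |ρ x - ρ y| ≤ H * ‖x - y‖ ^ γ) (x : E) {ω : E} (hω : ‖ω‖ = 1) :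
    |∫ t in Ioi r, t ^ (-α) * ⟪ω, gradient ρ (x + t • ω)⟫| ≤
      (1 + α / (α - γ)) * H * r ^ (γ - α) :=
  abs_integral_Ioi_rpow_mul_deriv_le (f := fun t => ρ (x + t • ω) - ρ x) hα hγα hr
    (fun _ _ => (hρ _).hasGradientAt.hasDerivAt_comp_add_smul.sub_const _)
    (fun t ht => by
      simpa [norm_smul_of_nonneg (hr.le.trans ht), hω] using hH (x + t • ω) x)

end Ray

theorem nonneg_of_abs_sub_le_mul_norm_rpow {F : Type*} [NormedAddCommGroup F] [Nontrivial F]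
    {ρ : F → ℝ} {H γ : ℝ} (h : ∀ x y, |ρ x - ρ y| ≤ H * ‖x - y‖ ^ γ) : 0 ≤ H := by
  obtain ⟨v, hv⟩ := exists_ne (0 : F)
  have hv' := h v 0
  rw [sub_zero] at hv'
  exact nonneg_of_mul_nonneg_left ((abs_nonneg _).trans hv')
    (Real.rpow_pos_of_pos (norm_pos_iff.2 hv) γ)

theorem stmt14_general (n : ℕ) (hn : 1 ≤ n) (α γ : ℝ) (hα1 : 1 < α)
    (hγ1 : γ < 1) :
    ∃ C : ℝ, 0 < C ∧
      ∀ ρ : EuclideanSpace ℝ (Fin n) → ℝ, ContDiff ℝ 1 ρ →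
      ∀ M : ℝ, (∀ y, |ρ y| ≤ M) →
      ∀ G : ℝ, (∀ y, ‖gradient ρ y‖ ≤ G) →
      ∀ H : ℝ, (∀ x y : EuclideanSpace ℝ (Fin n), |ρ x - ρ y| ≤ H * ‖x - y‖ ^ γ) →
      ∀ x : EuclideanSpace ℝ (Fin n), ∀ r : ℝ, 0 < r → r < 1 →
        |∫ z in {z : EuclideanSpace ℝ (Fin n) | r < ‖z‖},
            ⟪(‖z‖ ^ (-((n : ℝ) + α))) • z, gradient ρ (x + z)⟫| ≤
          C * (G + (M + H) * r ^ (γ - α)) := by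
  have : Nonempty (Fin n) := ⟨⟨0, hn⟩⟩
  set σ := (volume : Measure (EuclideanSpace ℝ (Fin n))).toSphere.real univ
  set K := 1 + α / (α - γ)
  have hK : 0 < K := add_pos_of_pos_of_nonneg one_pos (div_nonneg (by linarith) (by linarith))
  refine ⟨σ * K + 1, by positivity, fun ρ hρ M hM G hG H hH x r hr _ => ?_⟩
  have hI : |∫ z in {z : EuclideanSpace ℝ (Fin n) | r < ‖z‖},
      ⟪(‖z‖ ^ (-((n : ℝ) + α))) • z, gradient ρ (x + z)⟫| ≤ σ * (K * H * r ^ (γ - α)) := by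
    rw [← integral_indicator (measurableSet_lt measurable_const measurable_norm)]
    refine abs_integral_le_toSphere_real_mul volume fun ω => ?_
    rw [finrank_euclideanSpace_fin,
      setIntegral_Ioi_pow_mul_indicator_inner_norm_rpow_smul hn hr.le (norm_eq_of_mem_sphere ω)]
    exact abs_integral_Ioi_rpow_mul_inner_gradient_le (hρ.differentiable one_ne_zero)
      (by linarith) (by linarith) hr hH x (norm_eq_of_mem_sphere ω)
  have hG0 : 0 ≤ G := (norm_nonneg _).trans (hG x)
  have hM0 : 0 ≤ M := (abs_nonneg _).trans (hM x)
  have hH0 : 0 ≤ H := nonneg_of_abs_sub_le_mul_norm_rpow hH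
  have hR : 0 < r ^ (γ - α) := Real.rpow_pos_of_pos hr _
  have hσK : 0 ≤ σ * K := mul_nonneg measureReal_nonneg hK.le
  calc _ ≤ σ * (K * H * r ^ (γ - α)) := hI
    _ = σ * K * (H * r ^ (γ - α)) := by ring
    _ ≤ (σ * K + 1) * (G + (M + H) * r ^ (γ - α)) :=
        mul_le_mul (by linarith) (by nlinarith) (by positivity) (by positivity)

/-- Residual bound (term `I₃`): for `α ∈ (1,2)`, `γ ∈ (0,1)`, a bounded `C¹` density `ρ`
with bounded gradient and `γ`-Hölder seminorm at most `H`, and any `r ∈ (0,1)`,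
`|∫_{|z|>r} (z/|z|^{n+α}) · ∇ρ(x+z) dz| ≤ C (‖∇ρ‖_∞ + (‖ρ‖_∞ + [ρ]_γ) r^{γ−α})`. -/
theorem stmt14 (n : ℕ) (hn : 1 ≤ n) (α γ : ℝ) (hα1 : 1 < α) (hα2 : α < 2)
    (hγ0 : 0 < γ) (hγ1 : γ < 1) :
    ∃ C : ℝ, 0 < C ∧
      ∀ ρ : EuclideanSpace ℝ (Fin n) → ℝ, ContDiff ℝ 1 ρ →
      ∀ M : ℝ, (∀ y, |ρ y| ≤ M) →
      ∀ G : ℝ, (∀ y, ‖gradient ρ y‖ ≤ G) →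
      ∀ H : ℝ, (∀ x y : EuclideanSpace ℝ (Fin n), |ρ x - ρ y| ≤ H * ‖x - y‖ ^ γ) →
      ∀ x : EuclideanSpace ℝ (Fin n), ∀ r : ℝ, 0 < r → r < 1 →
        |∫ z in {z : EuclideanSpace ℝ (Fin n) | r < ‖z‖},
            ⟪(‖z‖ ^ (-((n : ℝ) + α))) • z, gradient ρ (x + z)⟫| ≤
          C * (G + (M + H) * r ^ (γ - α)) :=
  stmt14_general n hn α γ hα1 hγ1
end

section
/- Let p > 1 and c, C, a, b > 0, and let y : [0, ∞) → [0, ∞) be differentiable with y'(t) ≤ −c y(t)^p e^{a t} + C e^{−b t} for all t ≥ 0. Then there exist constants C' > 0 and δ' > 0 (depending on p, c, C, a, b and y(0)) such that y(t) ≤ C' e^{−δ' t} for all t ≥ 0. -/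
set_option maxHeartbeats 1000000 in
/-- ODE comparison lemma: a nonnegative differentiable `y` with
`y' ≤ −c y^p e^{at} + C e^{−bt}` (`p > 1`, `a, b, c, C > 0`) decays exponentially. -/
theorem stmt19 (p c C a b : ℝ) (hp : 1 < p) (hc : 0 < c) (hC : 0 < C)
    (ha : 0 < a) (hb : 0 < b) (y y' : ℝ → ℝ)
    (hy_nonneg : ∀ t ∈ Set.Ici (0 : ℝ), 0 ≤ y t)
    (hderiv : ∀ t ∈ Set.Ici (0 : ℝ), HasDerivWithinAt y (y' t) (Set.Ici 0) t)
    (hineq : ∀ t ∈ Set.Ici (0 : ℝ),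
      y' t ≤ -c * y t ^ p * Real.exp (a * t) + C * Real.exp (-b * t)) :
    ∃ C' : ℝ, 0 < C' ∧ ∃ δ' : ℝ, 0 < δ' ∧
      ∀ t ∈ Set.Ici (0 : ℝ), y t ≤ C' * Real.exp (-δ' * t) := by
  have hp0 : (0:ℝ) < p := lt_trans one_pos hp
  have hp1 : (0:ℝ) < p - 1 := by linarith
  -- choose δ'
  set δ' : ℝ := min (a / p) 1 with hδdef
  have hδpos : 0 < δ' := lt_min (div_pos ha hp0) one_pos
  have hδ1 : δ' ≤ 1 := min_le_right _ _
  have hδa : p * δ' ≤ a := by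
    have : δ' ≤ a / p := min_le_left _ _
    calc p * δ' ≤ p * (a / p) := by nlinarith
    _ = a := by field_simp
  -- choose C'
  set K₁ : ℝ := (2 / c) ^ (1 / (p - 1)) with hK₁def
  set K₂ : ℝ := (2 * (C + 1) / c) ^ (1 / p) with hK₂def
  have h2c : (0:ℝ) < 2 / c := by positivity
  have h2C : (0:ℝ) < 2 * (C + 1) / c := by positivity
  have hK₁pos : 0 < K₁ := Real.rpow_pos_of_pos h2c _
  have hK₂pos : 0 < K₂ := Real.rpow_pos_of_pos h2C _
  set C' : ℝ := max (max (y 0) 1) (max K₁ K₂) with hC'def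
  have hC'1 : (1:ℝ) ≤ C' := le_trans (le_max_right _ _) (le_max_left _ _)
  have hC'pos : (0:ℝ) < C' := lt_of_lt_of_le one_pos hC'1
  have hC'y0 : y 0 ≤ C' := le_trans (le_max_left _ _) (le_max_left _ _)
  have hC'K₁ : K₁ ≤ C' := le_trans (le_max_left _ _) (le_max_right _ _)
  have hC'K₂ : K₂ ≤ C' := le_trans (le_max_right _ _) (le_max_right _ _)
  -- key inequality : c * C'^p ≥ C' + (C + 1)
  have hK₁p : K₁ ^ (p - 1) = 2 / c := by
    rw [hK₁def, ← Real.rpow_mul (le_of_lt h2c), one_div,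
      inv_mul_cancel₀ (ne_of_gt hp1), Real.rpow_one]
  have hK₂p : K₂ ^ p = 2 * (C + 1) / c := by
    rw [hK₂def, ← Real.rpow_mul (le_of_lt h2C), one_div,
      inv_mul_cancel₀ (ne_of_gt hp0), Real.rpow_one]
  have hCp1 : 2 / c * C' ≤ C' ^ p := by
    have h1 : K₁ ^ (p - 1) ≤ C' ^ (p - 1) :=
      Real.rpow_le_rpow (le_of_lt hK₁pos) hC'K₁ (le_of_lt hp1)
    rw [hK₁p] at h1
    calc 2 / c * C' ≤ C' ^ (p - 1) * C' := by nlinarith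
    _ = C' ^ (p - 1) * C' ^ (1:ℝ) := by rw [Real.rpow_one]
    _ = C' ^ (p - 1 + 1) := (Real.rpow_add hC'pos _ _).symm
    _ = C' ^ p := by ring_nf
  have hCp2 : 2 * (C + 1) / c ≤ C' ^ p := by
    have h2 : K₂ ^ p ≤ C' ^ p :=
      Real.rpow_le_rpow (le_of_lt hK₂pos) hC'K₂ (le_of_lt hp0)
    rwa [hK₂p] at h2
  have hkey : C' + (C + 1) ≤ c * C' ^ p := by
    have : 2 / c * C' + 2 * (C + 1) / c ≤ 2 * C' ^ p := by linarith
    calc C' + (C + 1) = c / 2 * (2 / c * C' + 2 * (C + 1) / c) := by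
          field_simp
    _ ≤ c / 2 * (2 * C' ^ p) := by nlinarith
    _ = c * C' ^ p := by ring
  clear_value K₁ K₂
  clear_value C' δ'
  -- the barrier
  refine ⟨C', hC'pos, δ', hδpos, ?_⟩
  intro T hT
  set B : ℝ → ℝ := fun t => C' * Real.exp (-δ' * t) with hBdef
  set B' : ℝ → ℝ := fun t => C' * (Real.exp (-δ' * t) * (-δ')) with hB'def
  have hB : ∀ x, HasDerivAt B (B' x) x := by
    intro x
    have h1 : HasDerivAt (fun t : ℝ => -δ' * t) (-δ') x := by
      simpa using (hasDerivAt_id x).const_mul (-δ')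
    exact ((Real.hasDerivAt_exp (-δ' * x)).comp x h1).const_mul C'
  have hcont : ContinuousOn y (Set.Icc 0 T) := by
    intro x hx
    exact ((hderiv x (Set.mem_Icc.mp hx).1).continuousWithinAt).mono
      (fun z hz => (Set.mem_Icc.mp hz).1)
  have hf' : ∀ x ∈ Set.Ico (0:ℝ) T, HasDerivWithinAt y (y' x) (Set.Ici x) x := by
    intro x hx
    exact (hderiv x hx.1).mono (Set.Ici_subset_Ici.mpr hx.1)
  have bound : ∀ x ∈ Set.Ico (0:ℝ) T, y x = B x → y' x < B' x := by
    intro x hx heq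
    have hx0 : (0:ℝ) ≤ x := hx.1
    have hexp1 : Real.exp (-b * x) ≤ 1 := by
      rw [Real.exp_le_one_iff]; nlinarith
    have hyx : y x ^ p = C' ^ p * Real.exp ((-δ' * x) * p) := by
      rw [heq, hBdef]
      simp only
      rw [Real.mul_rpow (le_of_lt hC'pos) (le_of_lt (Real.exp_pos _)),
        ← Real.exp_mul]
    have hexp2 : (1:ℝ) ≤ Real.exp ((-δ' * x) * p) * Real.exp (a * x) := by
      rw [← Real.exp_add, ← Real.exp_zero, Real.exp_le_exp]
      nlinarith
    have h1 : y' x ≤ -c * (C' ^ p * Real.exp ((-δ' * x) * p)) * Real.exp (a * x)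
        + C * Real.exp (-b * x) := by
      have := hineq x hx0
      rwa [hyx] at this
    have hC'ppos : 0 < C' ^ p := Real.rpow_pos_of_pos hC'pos _
    set P := C' ^ p with hPdef
    set E := Real.exp ((-δ' * x) * p) with hEdef
    set F := Real.exp (a * x) with hFdef
    have hEpos : 0 < E := Real.exp_pos _
    have hFpos : 0 < F := Real.exp_pos _
    clear_value P E F
    have h2 : y' x ≤ -(c * P) + C := by
      have hEF : (1:ℝ) ≤ E * F := hexp2
      have h21 : c * P ≤ c * P * (E * F) :=
        le_mul_of_one_le_right (by positivity) hEF
      have hCb : C * Real.exp (-b * x) ≤ C :=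
        mul_le_of_le_one_right hC.le hexp1
      have h22 : -c * (P * E) * F = -(c * P * (E * F)) := by ring
      have h23 : -c * (P * E) * F ≤ -(c * P) := by rw [h22]; linarith
      linarith
    have h3 : y' x ≤ -C' - 1 := by
      have : C' + (C + 1) ≤ c * P := hkey
      linarith
    have h4 : -C' ≤ B' x := by
      simp only [hB'def]
      have he : Real.exp (-δ' * x) ≤ 1 := by
        rw [Real.exp_le_one_iff]
        exact mul_nonpos_of_nonpos_of_nonneg (by linarith) hx0
      have hepos := Real.exp_pos (-δ' * x)
      have h41 : δ' * Real.exp (-δ' * x) ≤ 1 :=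
        le_trans (mul_le_of_le_one_right hδpos.le he) hδ1
      nlinarith
    linarith
  have hmain := image_le_of_deriv_right_lt_deriv_boundary hcont hf'
    (by simpa [hBdef] using hC'y0) hB bound
  exact hmain (Set.mem_Icc.mpr ⟨hT, le_refl T⟩)
end
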